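/- Let a > 0 and let f ∈ C²([0,1)) be the unique solution of the profile equation on (0,1) with f(0) = a, f'(0) = 0. Then the limits of f, f' and f'' as x → 1⁻ exist and satisfy: 0 < lim_{x→1} f(x) < a, -∞ < lim_{x→1} f'(x) < 0, and -∞ < lim_{x→1} f''(x) < 0. -/

import Mathlib

open Set Filter Topology

/-- `f ∈ C²(S)` solves the profile equation
`f''(x) = (1 + f'(x)²)[f'(x)(x - 1/x) - f(x)]` for `x ∈ S \ {0}`,
with initial data `f(0) = a`, `f'(0) = 0`. -/
def SolvesProfile (a : ℝ) (S : Set ℝ) (f : ℝ → ℝ) : Prop :=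
  ContDiffOn ℝ 2 f S ∧ f 0 = a ∧ derivWithin f S 0 = 0 ∧
  ∀ x ∈ S, x ≠ 0 →
    derivWithin (derivWithin f S) S x
      = (1 + (derivWithin f S x) ^ 2) * (derivWithin f S x * (x - 1 / x) - f x)

/-!
The energy `log (1 + f'²) / 2 + f² / 2` has derivative `f'² (x - 1/x) ≤ 0`, which bounds `f'`
from below. The quantity `V = f + 2 (1 - x) f'` stays positive, because at a first zero of `V`
the equation forces `V' > 0`; since `V` is a positive multiple of the derivative of
`f / √(1 - x)`, this gives `f ≥ a √(1 - x) > 0`. Then `f'' < 0` wherever `f' ≥ 0`, so `f' < 0`,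
and `f'' ≥ -(1 + e^{a²}) a`. Hence `f` and `f'` are monotone up to a linear term and bounded, so
they have limits `b` and `c` at `1`; `f ≥ a √(1 - x)` and `f' ≥ -e^{a²}` give `b > 0`. The
equation gives `f'' → -(1 + c²) b < 0`, so `f'` is eventually decreasing and `c < 0`.
-/

theorem HasDerivAt.nonpos_of_isMinOn_Ioo {φ : ℝ → ℝ} {v c x : ℝ} (hcx : c < x)
    (hd : HasDerivAt φ v x) (hmin : IsMinOn φ (Ioo c x) x) : v ≤ 0 := by
  have : (𝓝[Ioo c x] x).NeBot := right_nhdsWithin_Ioo_neBot hcx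
  refine le_of_tendsto ((hasDerivWithinAt_iff_tendsto_slope'
    (notMem_Ioo_of_ge le_rfl)).1 (hd.hasDerivWithinAt (s := Ioo c x))) ?_
  filter_upwards [self_mem_nhdsWithin] with y hy
  rw [slope_def_field]
  exact div_nonpos_of_nonneg_of_nonpos (sub_nonneg.2 (isMinOn_iff.1 hmin y hy))
    (sub_nonpos.2 hy.2.le)

theorem HasDerivAt.nonneg_of_isMaxOn_Ioo {φ : ℝ → ℝ} {v c x : ℝ} (hcx : c < x)
    (hd : HasDerivAt φ v x) (hmax : IsMaxOn φ (Ioo c x) x) : 0 ≤ v :=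
  neg_nonpos.1 <| hd.neg.nonpos_of_isMinOn_Ioo hcx hmax.neg

theorem pos_of_deriv_pos_at_first_zero {V V' : ℝ → ℝ} {a b : ℝ}
    (hc : ContinuousOn V (Ico a b)) (hd : ∀ x ∈ Ioo a b, HasDerivAt V (V' x) x) (ha : 0 < V a)
    (hzero : ∀ x ∈ Ioo a b, V x = 0 → (∀ t ∈ Ico a x, 0 < V t) → 0 < V' x) :
    ∀ x ∈ Ico a b, 0 < V x := by
  intro z hz
  by_contra! hVz
  have hZ : IsCompact (Icc a z ∩ V ⁻¹' Iic 0) := isCompact_Icc.of_isClosed_subset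
    ((hc.mono (Icc_subset_Ico_right hz.2)).preimage_isClosed_of_isClosed isClosed_Icc
      isClosed_Iic) inter_subset_left
  obtain ⟨x, ⟨⟨hax, hxz⟩, hVx⟩, hleast⟩ := hZ.exists_isLeast ⟨z, ⟨hz.1, le_rfl⟩, hVz⟩
  have hax : a < x := hax.lt_of_ne (by rintro rfl; exact hVx.not_gt ha)
  have hbefore : ∀ t ∈ Ico a x, 0 < V t := fun t ht => by
    by_contra! hVt
    exact (hleast ⟨⟨ht.1, ht.2.le.trans hxz⟩, hVt⟩).not_gt ht.2
  have hxb : x ∈ Ioo a b := ⟨hax, hxz.trans_lt hz.2⟩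
  have hVx0 : V x = 0 := by
    have : (𝓝[Ioo a x] x).NeBot := right_nhdsWithin_Ioo_neBot hax
    refine le_antisymm hVx (ge_of_tendsto ((hc x ⟨hax.le, hxb.2⟩).mono
      (Ioo_subset_Ico_self.trans (Ico_subset_Ico_right hxb.2.le))) ?_)
    filter_upwards [self_mem_nhdsWithin] with t ht using (hbefore t ⟨ht.1.le, ht.2⟩).le
  exact (hzero x hxb hVx0 hbefore).not_ge <| (hd x hxb).nonpos_of_isMinOn_Ioo hax <|
    isMinOn_iff.2 fun y hy => hVx0 ▸ (hbefore y ⟨hy.1.le, hy.2⟩).le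

theorem neg_of_deriv_neg_where_nonneg {φ φ' : ℝ → ℝ} {a b : ℝ}
    (hc : ContinuousOn φ (Ico a b)) (hd : ∀ x ∈ Ioo a b, HasDerivAt φ (φ' x) x) (ha : φ a ≤ 0)
    (hneg : ∀ x ∈ Ioo a b, 0 ≤ φ x → φ' x < 0) : ∀ x ∈ Ioo a b, φ x < 0 := by
  intro z hz
  by_contra! hφz
  obtain ⟨c, hc_mem, hmax⟩ := isCompact_Icc.exists_isMaxOn (nonempty_Icc.2 hz.1.le)
    (hc.mono (Icc_subset_Ico_right hz.2))
  rw [isMaxOn_iff] at hmax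
  obtain ⟨p, hap, hpz, hφp, hpmax⟩ :
      ∃ p, a < p ∧ p ≤ z ∧ 0 ≤ φ p ∧ ∀ y ∈ Ioo a p, φ y ≤ φ p := by
    rcases hc_mem.1.eq_or_lt with rfl | hac
    · exact ⟨z, hz.1, le_rfl, hφz, fun y hy => (hmax y ⟨hy.1.le, hy.2.le⟩).trans (ha.trans hφz)⟩
    · exact ⟨c, hac, hc_mem.2, hφz.trans (hmax z ⟨hz.1.le, le_rfl⟩),
        fun y hy => hmax y ⟨hy.1.le, hy.2.le.trans hc_mem.2⟩⟩
  have hp : p ∈ Ioo a b := ⟨hap, hpz.trans_lt hz.2⟩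
  exact (hneg p hp hφp).not_ge ((hd p hp).nonneg_of_isMaxOn_Ioo hap (isMaxOn_iff.2 hpmax))

theorem exists_tendsto_nhdsLT_of_deriv_ge {φ φ' : ℝ → ℝ} {u v K B : ℝ} (huv : u < v)
    (hd : ∀ x ∈ Ioo u v, HasDerivAt φ (φ' x) x) (hK : ∀ x ∈ Ioo u v, -K ≤ φ' x)
    (hB : ∀ x ∈ Ioo u v, φ x ≤ B) :
    ∃ L, Tendsto φ (𝓝[<] v) (𝓝 L) ∧ ∀ y ∈ Ioo u v, φ y - K * (v - y) ≤ L := by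
  let ψ := fun x => φ x + K * x
  have hψd : ∀ x ∈ Ioo u v, HasDerivAt ψ (φ' x + K) x := fun x hx => by
    have := (hd x hx).add ((hasDerivAt_id' x).const_mul K)
    rwa [mul_one] at this
  have hmono : MonotoneOn ψ (Ioo u v) :=
    monotoneOn_of_hasDerivWithinAt_nonneg (convex_Ioo u v)
      (fun x hx => (hψd x hx).continuousAt.continuousWithinAt)
      (fun x hx => (hψd x (interior_subset hx)).hasDerivWithinAt)
      (fun x hx => by linarith [hK x (interior_subset hx)])
  have hbdd : BddAbove (ψ '' Ioo u v) := by
    refine ⟨B + max (K * u) (K * v), ?_⟩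
    rintro _ ⟨x, hx, rfl⟩
    have : K * x ≤ max (K * u) (K * v) := by
      rcases le_total 0 K with hK0 | hK0
      · exact le_max_of_le_right (by nlinarith [hx.2])
      · exact le_max_of_le_left (by nlinarith [hx.1])
    linarith [hB x hx]
  have hψ := hmono.tendsto_nhdsWithin_Ioo_left (nonempty_Ioo.2 huv) hbdd
  refine ⟨sSup (ψ '' Ioo u v) - K * v, ?_, fun y hy => ?_⟩
  · have hx : Tendsto (fun x : ℝ => K * x) (𝓝[<] v) (𝓝 (K * v)) :=
      ((continuous_const_mul K).tendsto v).mono_left nhdsWithin_le_nhds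
    simpa [ψ] using hψ.sub hx
  · have := le_csSup hbdd (mem_image_of_mem ψ hy)
    simp only [ψ] at this
    linarith

theorem eventually_le_of_tendsto_of_deriv_nonpos {φ φ' : ℝ → ℝ} {v L : ℝ}
    (hφ : Tendsto φ (𝓝[<] v) (𝓝 L))
    (hd : ∀ᶠ x in 𝓝[<] v, HasDerivAt φ (φ' x) x ∧ φ' x ≤ 0) : ∀ᶠ y in 𝓝[<] v, L ≤ φ y := by
  obtain ⟨w, hwv, hw⟩ := mem_nhdsLT_iff_exists_Ioo_subset.1 hd
  have hanti : AntitoneOn φ (Ioo w v) :=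
    antitoneOn_of_hasDerivWithinAt_nonpos (convex_Ioo w v)
      (fun x hx => (hw hx).1.continuousAt.continuousWithinAt)
      (fun x hx => (hw (interior_subset hx)).1.hasDerivWithinAt)
      (fun x hx => (hw (interior_subset hx)).2)
  filter_upwards [Ioo_mem_nhdsLT hwv] with y hy
  refine le_of_tendsto hφ ?_
  filter_upwards [Ioo_mem_nhdsLT hy.2] with x hx
  exact hanti hy ⟨hy.1.trans hx.1, hx.2⟩ hx.1.le

theorem sub_one_div_neg_of_mem_Ioo {x : ℝ} (hx : x ∈ Ioo (0 : ℝ) 1) : x - 1 / x < 0 := by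
  linarith [one_lt_one_div hx.1 hx.2, hx.2]

/-- `(f, g, h)` plays the role of `(f, f', f'')` for a solution on `[0, 1)`. -/
structure ProfileSystem (a : ℝ) (f g h : ℝ → ℝ) : Prop where
  continuousOn_f : ContinuousOn f (Ico 0 1)
  continuousOn_g : ContinuousOn g (Ico 0 1)
  hasDerivAt_f : ∀ x ∈ Ioo 0 1, HasDerivAt f (g x) x
  hasDerivAt_g : ∀ x ∈ Ioo 0 1, HasDerivAt g (h x) x
  ode : ∀ x ∈ Ioo 0 1, h x = (1 + g x ^ 2) * (g x * (x - 1 / x) - f x)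
  f_zero : f 0 = a
  g_zero : g 0 = 0

theorem SolvesProfile.profileSystem {a : ℝ} {f : ℝ → ℝ} (hf : SolvesProfile a (Ico 0 1) f) :
    ProfileSystem a f (derivWithin f (Ico 0 1))
      (derivWithin (derivWithin f (Ico 0 1)) (Ico 0 1)) := by
  obtain ⟨hC2, hf0, hg0, hode⟩ := hf
  have hS := uniqueDiffOn_Ico (0 : ℝ) 1
  have hC1 : ContDiffOn ℝ 1 (derivWithin f (Ico 0 1)) (Ico 0 1) :=
    hC2.derivWithin hS (by norm_num)
  have hnhds : ∀ x ∈ Ioo (0 : ℝ) 1, Ico (0 : ℝ) 1 ∈ 𝓝 x := fun x hx =>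
    mem_of_superset (isOpen_Ioo.mem_nhds hx) Ioo_subset_Ico_self
  refine ⟨hC2.continuousOn, hC1.continuousOn, fun x hx => ?_, fun x hx => ?_,
    fun x hx => hode x (Ioo_subset_Ico_self hx) hx.1.ne', hf0, hg0⟩
  · exact ((hC2.differentiableOn (by norm_num) x (Ioo_subset_Ico_self hx)).hasDerivWithinAt
      ).hasDerivAt (hnhds x hx)
  · exact ((hC1.differentiableOn one_ne_zero x (Ioo_subset_Ico_self hx)).hasDerivWithinAt
      ).hasDerivAt (hnhds x hx)

namespace ProfileSystem

variable {a : ℝ} {f g h : ℝ → ℝ}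

theorem energy_le (hp : ProfileSystem a f g h) :
    ∀ x ∈ Ico (0 : ℝ) 1, Real.log (1 + g x ^ 2) / 2 + f x ^ 2 / 2 ≤ a ^ 2 / 2 := by
  have hE : ∀ x ∈ Ioo (0 : ℝ) 1, HasDerivAt (fun y => Real.log (1 + g y ^ 2) / 2 + f y ^ 2 / 2)
      (g x ^ 2 * (x - 1 / x)) x := fun x hx => by
    have hpos : 0 < 1 + g x ^ 2 := by positivity
    have := ((((hp.hasDerivAt_g x hx).pow 2).const_add 1).log hpos.ne' |>.div_const 2).add
      (((hp.hasDerivAt_f x hx).pow 2).div_const 2)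
    refine this.congr_deriv ?_
    rw [hp.ode x hx, Pi.pow_apply]
    field_simp
    ring
  have hanti : AntitoneOn (fun y => Real.log (1 + g y ^ 2) / 2 + f y ^ 2 / 2) (Ico 0 1) := by
    refine antitoneOn_of_hasDerivWithinAt_nonpos (convex_Ico 0 1) ?_
      (fun x hx => (hE x (by rwa [interior_Ico] at hx)).hasDerivWithinAt) (fun x hx => ?_)
    · exact (((continuousOn_const.add (hp.continuousOn_g.pow 2)).log
        fun x _ => (by positivity : (0 : ℝ) < 1 + g x ^ 2).ne').div_const 2).add
        ((hp.continuousOn_f.pow 2).div_const 2)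
    · rw [interior_Ico] at hx
      exact mul_nonpos_of_nonneg_of_nonpos (sq_nonneg _) (sub_one_div_neg_of_mem_Ioo hx).le
  intro x hx
  simpa [hp.f_zero, hp.g_zero] using hanti (left_mem_Ico.2 one_pos) hx hx.1

theorem sq_g_lt (hp : ProfileSystem a f g h) : ∀ x ∈ Ico (0 : ℝ) 1, g x ^ 2 < Real.exp (a ^ 2) := by
  intro x hx
  have hlog : Real.log (1 + g x ^ 2) ≤ a ^ 2 := by nlinarith [hp.energy_le x hx, sq_nonneg (f x)]
  linarith [(Real.log_le_iff_le_exp (by positivity)).1 hlog]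

theorem neg_exp_lt_g (hp : ProfileSystem a f g h) :
    ∀ x ∈ Ico (0 : ℝ) 1, -Real.exp (a ^ 2) < g x := by
  intro x hx
  have hexp : 1 ≤ Real.exp (a ^ 2) := Real.one_le_exp (sq_nonneg a)
  refine (abs_lt_of_sq_lt_sq' ((hp.sq_g_lt x hx).trans_le ?_) (by positivity)).1
  nlinarith

theorem mul_sqrt_le_of_forall_pos (hp : ProfileSystem a f g h) {y : ℝ} (hy : y ∈ Ico (0 : ℝ) 1)
    (hV : ∀ t ∈ Ioo 0 y, 0 < f t + 2 * (1 - t) * g t) : a * √(1 - y) ≤ f y := by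
  have hsqrt : ∀ t ∈ Icc 0 y, 0 < √(1 - t) := fun t ht => Real.sqrt_pos.2 (by linarith [ht.2, hy.2])
  have hd : ∀ t ∈ Ioo 0 y, HasDerivAt (fun u => f u / √(1 - u))
      ((g t * √(1 - t) - f t * (-1 / (2 * √(1 - t)))) / √(1 - t) ^ 2) t := fun t ht =>
    (hp.hasDerivAt_f t ⟨ht.1, ht.2.trans hy.2⟩).div
      (((hasDerivAt_id' t).const_sub 1).sqrt (by linarith [ht.2, hy.2]))
      (hsqrt t (Ioo_subset_Icc_self ht)).ne'
  have hmono : MonotoneOn (fun u => f u / √(1 - u)) (Icc 0 y) := by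
    refine monotoneOn_of_hasDerivWithinAt_nonneg (convex_Icc 0 y)
      ((hp.continuousOn_f.mono (Icc_subset_Ico_right hy.2)).div
        (continuousOn_const.sub continuousOn_id).sqrt fun t ht => (hsqrt t ht).ne')
      (fun t ht => (hd t (by rwa [interior_Icc] at ht)).hasDerivWithinAt) fun t ht => ?_
    rw [interior_Icc] at ht
    have hs : 0 < √(1 - t) := hsqrt t (Ioo_subset_Icc_self ht)
    have hs2 : √(1 - t) ^ 2 = 1 - t := Real.sq_sqrt (by linarith [ht.2, hy.2])
    have hnum : g t * √(1 - t) - f t * (-1 / (2 * √(1 - t)))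
        = (f t + 2 * (1 - t) * g t) / (2 * √(1 - t)) := by
      field_simp
      linear_combination 2 * g t * hs2
    rw [hnum]
    exact div_nonneg (div_nonneg (hV t ht).le (by positivity)) (by positivity)
  have : f 0 / √(1 - 0) ≤ f y / √(1 - y) :=
    hmono (left_mem_Icc.2 hy.1) (right_mem_Icc.2 hy.1) hy.1
  rwa [hp.f_zero, sub_zero, Real.sqrt_one, div_one,
    le_div_iff₀ (hsqrt y (right_mem_Icc.2 hy.1))] at this

theorem f_add_two_mul_g_pos (hp : ProfileSystem a f g h) (ha : 0 < a) :
    ∀ x ∈ Ico (0 : ℝ) 1, 0 < f x + 2 * (1 - x) * g x := by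
  refine pos_of_deriv_pos_at_first_zero (V' := fun x => -g x + 2 * (1 - x) * h x)
    (hp.continuousOn_f.add ((continuousOn_const.mul (continuousOn_const.sub continuousOn_id)).mul
      hp.continuousOn_g)) (fun x hx => ?_) (by simpa [hp.f_zero, hp.g_zero] using ha)
    fun x hx hV0 hbefore => ?_
  · refine ((hp.hasDerivAt_f x hx).add ((((hasDerivAt_id' x).const_sub 1).const_mul 2).mul
      (hp.hasDerivAt_g x hx))).congr_deriv ?_
    ring
  · have hf : 0 < f x := lt_of_lt_of_le (by have := Real.sqrt_pos.2 (sub_pos.2 hx.2); positivity)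
      (hp.mul_sqrt_le_of_forall_pos ⟨hx.1.le, hx.2⟩ fun t ht => hbefore t ⟨ht.1.le, ht.2⟩)
    have hg : g x < 0 := by nlinarith [hx.2]
    have hh : x * h x = -(1 + g x ^ 2) * g x * (1 - x) ^ 2 := by
      rw [hp.ode x hx, show f x = -(2 * (1 - x) * g x) by linarith]
      field_simp [hx.1.ne']
      ring
    have : 0 < x * (2 * (1 - x) * h x) := by
      rw [show x * (2 * (1 - x) * h x) = 2 * (1 - x) * (1 + g x ^ 2) * (-g x) * (1 - x) ^ 2 by
        linear_combination 2 * (1 - x) * hh]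
      have := sub_pos.2 hx.2
      have := neg_pos.2 hg
      positivity
    nlinarith [hx.1]

theorem mul_sqrt_le (hp : ProfileSystem a f g h) (ha : 0 < a) :
    ∀ x ∈ Ico (0 : ℝ) 1, a * √(1 - x) ≤ f x := fun _ hx =>
  hp.mul_sqrt_le_of_forall_pos hx fun t ht =>
    hp.f_add_two_mul_g_pos ha t ⟨ht.1.le, ht.2.trans hx.2⟩

theorem f_pos (hp : ProfileSystem a f g h) (ha : 0 < a) : ∀ x ∈ Ico (0 : ℝ) 1, 0 < f x :=
  fun x hx => lt_of_lt_of_le (by have := Real.sqrt_pos.2 (sub_pos.2 hx.2); positivity)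
    (hp.mul_sqrt_le ha x hx)

theorem g_neg (hp : ProfileSystem a f g h) (ha : 0 < a) : ∀ x ∈ Ioo (0 : ℝ) 1, g x < 0 :=
  neg_of_deriv_neg_where_nonneg hp.continuousOn_g hp.hasDerivAt_g hp.g_zero.le fun x hx hgx => by
    rw [hp.ode x hx]
    have := hp.f_pos ha x (Ioo_subset_Ico_self hx)
    have := mul_nonpos_of_nonneg_of_nonpos hgx (sub_one_div_neg_of_mem_Ioo hx).le
    exact mul_neg_of_pos_of_neg (by positivity) (by linarith)

theorem strictAntiOn_f (hp : ProfileSystem a f g h) (ha : 0 < a) : StrictAntiOn f (Ico 0 1) :=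
  strictAntiOn_of_hasDerivWithinAt_neg (convex_Ico 0 1) hp.continuousOn_f
    (fun x hx => (hp.hasDerivAt_f x (by rwa [interior_Ico] at hx)).hasDerivWithinAt)
    fun x hx => hp.g_neg ha x (by rwa [interior_Ico] at hx)

theorem neg_le_h (hp : ProfileSystem a f g h) (ha : 0 < a) :
    ∀ x ∈ Ioo (0 : ℝ) 1, -((1 + Real.exp (a ^ 2)) * a) ≤ h x := by
  intro x hx
  have hf := hp.f_pos ha x (Ioo_subset_Ico_self hx)
  have hfa := hp.strictAntiOn_f ha (left_mem_Ico.2 one_pos) (Ioo_subset_Ico_self hx) hx.1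
  have hg2 := hp.sq_g_lt x (Ioo_subset_Ico_self hx)
  have hgx := mul_nonneg_of_nonpos_of_nonpos (hp.g_neg ha x hx).le
    (sub_one_div_neg_of_mem_Ioo hx).le
  rw [hp.ode x hx]
  rw [hp.f_zero] at hfa
  nlinarith [mul_le_mul hg2.le hfa.le hf.le (Real.exp_pos _).le]

theorem exists_tendsto_f (hp : ProfileSystem a f g h) (ha : 0 < a) :
    ∃ b, 0 < b ∧ b < a ∧ Tendsto f (𝓝[<] 1) (𝓝 b) := by
  set K := Real.exp (a ^ 2)
  have hK : 0 < K := Real.exp_pos _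
  obtain ⟨b, hfb, hbound⟩ := exists_tendsto_nhdsLT_of_deriv_ge (B := a) zero_lt_one
    hp.hasDerivAt_f (fun x hx => (hp.neg_exp_lt_g x (Ioo_subset_Ico_self hx)).le)
    fun x hx => (hp.strictAntiOn_f ha (left_mem_Ico.2 one_pos) (Ioo_subset_Ico_self hx)
      hx.1).le.trans_eq hp.f_zero
  refine ⟨b, ?_, ?_, hfb⟩
  · -- at `y = 1 - s²`: `b ≥ f y - K s² ≥ a s - K s² > 0` once `K s ≤ a / 2`
    set s := min (1 / 2) (a / (2 * K))
    have hs : 0 < s := lt_min one_half_pos (by positivity)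
    have hKs : K * s ≤ a / 2 := by
      calc K * s ≤ K * (a / (2 * K)) := mul_le_mul_of_nonneg_left (min_le_right _ _) hK.le
        _ = a / 2 := by field_simp
    have hy : 1 - s ^ 2 ∈ Ioo (0 : ℝ) 1 := ⟨by nlinarith [min_le_left (1 / 2 : ℝ) (a / (2 * K))],
      by nlinarith⟩
    have hfy := hp.mul_sqrt_le ha _ (Ioo_subset_Ico_self hy)
    rw [sub_sub_cancel, Real.sqrt_sq hs.le] at hfy
    nlinarith [hbound _ hy]
  · have hev : ∀ᶠ x in 𝓝[<] (1 : ℝ), x ∈ Ioo 0 1 := Ioo_mem_nhdsLT one_pos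
    obtain ⟨y, hby, hy⟩ := ((eventually_le_of_tendsto_of_deriv_nonpos hfb
      (hev.mono fun x hx => ⟨hp.hasDerivAt_f x hx, (hp.g_neg ha x hx).le⟩)).and hev).exists
    have := hp.strictAntiOn_f ha (left_mem_Ico.2 one_pos) (Ioo_subset_Ico_self hy) hy.1
    linarith [hp.f_zero]

theorem exists_tendsto_g (hp : ProfileSystem a f g h) (ha : 0 < a) :
    ∃ c, Tendsto g (𝓝[<] 1) (𝓝 c) :=
  (exists_tendsto_nhdsLT_of_deriv_ge (B := 0) zero_lt_one hp.hasDerivAt_g (hp.neg_le_h ha)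
    fun x hx => (hp.g_neg ha x hx).le).imp fun _ hc => hc.1

theorem tendsto_h (hp : ProfileSystem a f g h) {b c : ℝ} (hfb : Tendsto f (𝓝[<] 1) (𝓝 b))
    (hgc : Tendsto g (𝓝[<] 1) (𝓝 c)) : Tendsto h (𝓝[<] 1) (𝓝 (-(1 + c ^ 2) * b)) := by
  have hx : Tendsto (fun x : ℝ => x - 1 / x) (𝓝[<] 1) (𝓝 (1 - 1 / 1)) :=
    ((continuousAt_id.sub (continuousAt_const.div continuousAt_id one_ne_zero)).tendsto
      ).mono_left nhdsWithin_le_nhds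
  have := ((tendsto_const_nhds (x := (1 : ℝ))).add (hgc.pow 2)).mul ((hgc.mul hx).sub hfb)
  rw [show (1 + c ^ 2) * (c * (1 - 1 / 1) - b) = -(1 + c ^ 2) * b by ring] at this
  refine this.congr' ?_
  filter_upwards [Ioo_mem_nhdsLT one_pos] with x hx using (hp.ode x hx).symm

theorem neg_of_tendsto_g (hp : ProfileSystem a f g h) (ha : 0 < a) {b c : ℝ} (hb : 0 < b)
    (hfb : Tendsto f (𝓝[<] 1) (𝓝 b)) (hgc : Tendsto g (𝓝[<] 1) (𝓝 c)) : c < 0 := by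
  have hev : ∀ᶠ x in 𝓝[<] (1 : ℝ), x ∈ Ioo 0 1 := Ioo_mem_nhdsLT one_pos
  have hh := (hp.tendsto_h hfb hgc).eventually_lt_const
    (show -(1 + c ^ 2) * b < 0 by nlinarith [sq_nonneg c])
  obtain ⟨y, hcy, hy⟩ := ((eventually_le_of_tendsto_of_deriv_nonpos hgc
    ((hev.and hh).mono fun x hx => ⟨hp.hasDerivAt_g x hx.1, hx.2.le⟩)).and hev).exists
  exact hcy.trans_lt (hp.g_neg ha y hy)

end ProfileSystem

/-- If `f ∈ C²([0,1))` is the solution of the profile equation with `f(0) = a > 0`,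
`f'(0) = 0`, then `f`, `f'` and `f''` have finite limits as `x → 1⁻`, with
`0 < lim f < a`, `lim f' < 0` and `lim f'' < 0`. -/
theorem profile_limits_at_one (a : ℝ) (ha : 0 < a)
    (f : ℝ → ℝ) (hf : SolvesProfile a (Ico 0 1) f) :
    (∃ b : ℝ, 0 < b ∧ b < a ∧ Tendsto f (𝓝[Ico (0:ℝ) 1] 1) (𝓝 b)) ∧
    (∃ c : ℝ, c < 0 ∧ Tendsto (derivWithin f (Ico 0 1)) (𝓝[Ico (0:ℝ) 1] 1) (𝓝 c)) ∧
    (∃ d : ℝ, d < 0 ∧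
      Tendsto (derivWithin (derivWithin f (Ico 0 1)) (Ico 0 1)) (𝓝[Ico (0:ℝ) 1] 1) (𝓝 d)) := by
  have hp := hf.profileSystem
  rw [nhdsWithin_Ico_eq_nhdsLT one_pos]
  obtain ⟨b, hb, hba, hfb⟩ := hp.exists_tendsto_f ha
  obtain ⟨c, hgc⟩ := hp.exists_tendsto_g ha
  exact ⟨⟨b, hb, hba, hfb⟩, ⟨c, hp.neg_of_tendsto_g ha hb hfb hgc, hgc⟩,
    ⟨_, by nlinarith [sq_nonneg c], hp.tendsto_h hfb hgc⟩⟩
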